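/- Over a field K, a functor of 𝒦-modules 𝕄 is D-proquasi-coherent if and only if the natural map 𝕄*(K) → Hom_K(𝕄(K), K), w ↦ w_K, is injective. In particular, injectivity of evaluation-at-K on the dual for the single module N = K suffices to give injectivity of Hom_𝒦(𝕄, 𝒩) → Hom_K(𝕄(K), N) for all K-vector spaces N. -/

import Mathlib

open TensorProduct

universe v

/-- The data of a (covariant) functor of modules on the category of commutative
`R`-algebras: an `S`-module `obj S` for every commutative `R`-algebra `S`, together
with transition maps along `R`-algebra homomorphisms. -/
structure ModuleFunctorData (R : Type) [CommRing R] : Type (v + 1) where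
  obj : ∀ (S : Type) [CommRing S] [Algebra R S], Type v
  addCommGroup : ∀ (S : Type) [CommRing S] [Algebra R S], AddCommGroup (obj S)
  module : ∀ (S : Type) [CommRing S] [Algebra R S],
    @Module S (obj S) _ (addCommGroup S).toAddCommMonoid
  map : ∀ {S S' : Type} [CommRing S] [Algebra R S] [CommRing S'] [Algebra R S'],
    (S →ₐ[R] S') → obj S → obj S'

attribute [instance] ModuleFunctorData.addCommGroup ModuleFunctorData.module

/-- A functor of `𝒦`-modules: a functor from commutative `R`-algebras to abelian groups
with a functorial module structure. -/
structure ModuleFunctor (R : Type) [CommRing R] extends ModuleFunctorData.{v} R :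
    Type (v + 1) where
  map_add : ∀ {S S' : Type} [CommRing S] [Algebra R S] [CommRing S'] [Algebra R S']
    (φ : S →ₐ[R] S') (x y : obj S), map φ (x + y) = map φ x + map φ y
  map_smul : ∀ {S S' : Type} [CommRing S] [Algebra R S] [CommRing S'] [Algebra R S']
    (φ : S →ₐ[R] S') (s : S) (x : obj S), map φ (s • x) = φ s • map φ x
  map_id : ∀ (S : Type) [CommRing S] [Algebra R S] (x : obj S), map (AlgHom.id R S) x = x
  map_comp : ∀ {S S' S'' : Type} [CommRing S] [Algebra R S] [CommRing S'] [Algebra R S']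
    [CommRing S''] [Algebra R S''] (φ : S →ₐ[R] S') (ψ : S' →ₐ[R] S'') (x : obj S),
    map (ψ.comp φ) x = map ψ (map φ x)

/-- Natural `R`-linear transformations from a functor of modules `F` to the
quasi-coherent module `𝒩 : S ↦ S ⊗_R N` associated with an `R`-module `N`. -/
def QCHom (R : Type) [CommRing R] (F : ModuleFunctor.{v} R) (N : Type) [AddCommGroup N]
    [Module R N] :=
  {f : ∀ (S : Type) [CommRing S] [Algebra R S], F.obj S →ₗ[S] S ⊗[R] N //
    ∀ (S S' : Type) [CommRing S] [Algebra R S] [CommRing S'] [Algebra R S']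
      (φ : S →ₐ[R] S') (x : F.obj S),
      f S' (F.map φ x) = LinearMap.rTensor N φ.toLinearMap (f S x)}

/-- Natural `K`-linear transformations from a functor of modules `F` to the identity
functor `𝒦 : S ↦ S`. -/
def KHom (K : Type) [CommRing K] (F : ModuleFunctor.{0} K) :=
  {f : ∀ (S : Type) [CommRing S] [Algebra K S], F.obj S →ₗ[S] S //
    ∀ (S S' : Type) [CommRing S] [Algebra K S] [CommRing S'] [Algebra K S']
      (φ : S →ₐ[K] S') (x : F.obj S), f S' (F.map φ x) = φ (f S x)}

/-!
The identity functor `𝒦` is the quasi-coherent module associated with `N = K`, which gives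
one implication. Conversely, a morphism `𝕄 → 𝒩` is determined by its composites with the
morphisms `𝒩 → 𝒦` induced by the linear forms on `N`, because over a field these forms
separate the points of every `S ⊗_K N`; each composite lies in `𝕄*` and is therefore
determined by its component at `K`, which only depends on the component of the morphism at `K`.
-/

theorem TensorProduct.eq_of_forall_lTensor_eq {R M N : Type*} [CommSemiring R]
    [AddCommMonoid M] [Module R M] [AddCommMonoid N] [Module R N] [Module.Free R N]
    {x y : M ⊗[R] N} (h : ∀ l : N →ₗ[R] R, l.lTensor M x = l.lTensor M y) : x = y := by
  apply (equivFinsuppOfBasisRight (Module.Free.chooseBasis R N)).injective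
  ext i
  simp only [equivFinsuppOfBasisRight_apply, h]

theorem TensorProduct.AlgebraTensorModule.rid_rTensor {R S S' : Type*} [CommRing R] [CommRing S]
    [Algebra R S] [CommRing S'] [Algebra R S'] (φ : S →ₐ[R] S') (t : S ⊗[R] R) :
    AlgebraTensorModule.rid R S' S' (φ.toLinearMap.rTensor R t) =
      φ (AlgebraTensorModule.rid R S S t) := by
  induction t with
  | zero => simp
  | add t t' ht ht' => simp only [map_add, ht, ht']
  | tmul s r => simp

namespace QCHom

variable {R : Type} [CommRing R] {F : ModuleFunctor.{v} R}

theorem ext {N : Type} [AddCommGroup N] [Module R N] {f g : QCHom R F N}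
    (h : ∀ (S : Type) [CommRing S] [Algebra R S] (x : F.obj S), f.1 S x = g.1 S x) :
    f = g :=
  Subtype.ext <| funext fun S => funext fun _ => funext fun _ => LinearMap.ext (h S)

def map {N N' : Type} [AddCommGroup N] [Module R N] [AddCommGroup N'] [Module R N']
    (f : QCHom R F N) (l : N →ₗ[R] N') : QCHom R F N' :=
  ⟨fun S _ _ => l.baseChange S ∘ₗ f.1 S, fun S S' _ _ _ _ φ x => by
    simp only [LinearMap.comp_apply, f.2 S S' φ x, LinearMap.baseChange_eq_ltensor]
    rw [← LinearMap.comp_apply, ← LinearMap.comp_apply, LinearMap.lTensor_comp_rTensor,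
      LinearMap.rTensor_comp_lTensor]⟩

end QCHom

def KHom.equivQCHom (K : Type) [CommRing K] (F : ModuleFunctor.{0} K) :
    KHom K F ≃ QCHom K F K where
  toFun f := ⟨fun S _ _ => (AlgebraTensorModule.rid K S S).symm.toLinearMap ∘ₗ f.1 S,
    fun S S' _ _ _ _ φ x => (AlgebraTensorModule.rid K S' S').injective <| by
      simp [f.2 S S' φ x]⟩
  invFun f := ⟨fun S _ _ => (AlgebraTensorModule.rid K S S).toLinearMap ∘ₗ f.1 S,
    fun S S' _ _ _ _ φ x => by
      simpa [f.2 S S' φ x] using AlgebraTensorModule.rid_rTensor φ (f.1 S x)⟩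
  left_inv f := by apply Subtype.ext; funext S _ _; ext x; simp
  right_inv f := QCHom.ext fun S _ _ x => by simp

/-- Over a field `K`, a functor of `𝒦`-modules `𝕄` is D-proquasi-coherent
(i.e. `Hom_𝒦(𝕄, 𝒩) → Hom_K(𝕄(K), N)` is injective for every `K`-vector space `N`) if
and only if the natural map `𝕄*(K) → Hom_K(𝕄(K), K)`, `w ↦ w_K`, is injective. -/
theorem statement9 (K : Type) [Field K] (F : ModuleFunctor.{0} K) :
    (∀ (N : Type) [AddCommGroup N] [Module K N],
        Function.Injective (fun f : QCHom K F N => f.1 K)) ↔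
    Function.Injective (fun f : KHom K F => f.1 K) := by
  let e := KHom.equivQCHom K F
  constructor
  · intro h f g hfg
    exact e.injective (h K (congrArg (_ ∘ₗ ·) hfg))
  · intro h N _ _ f g hfg
    refine QCHom.ext fun S _ _ x => TensorProduct.eq_of_forall_lTensor_eq fun l => ?_
    have hl : e.symm (f.map l) = e.symm (g.map l) :=
      h (congrArg (fun m => _ ∘ₗ l.baseChange K ∘ₗ m) hfg)
    exact (AlgebraTensorModule.rid K S S).injective (congrArg (fun w : KHom K F => w.1 S x) hl)
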